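/- arXiv:1805.07236 — 2 statements merged into one kernel-verified Lean document; each statement's English description precedes it below -/
import Mathlib

section
/- Let X be a compact metric space and C(X) the unital separable abelian C*-algebra of continuous functions on X. Let (N,τ) be a type II₁ factor with separable predual and p a projection in N. Suppose π : C(X) → N is a unital *-homomorphism and ρ : C(X) → pNp is a unital *-homomorphism (so ρ(1) = p) such that τ(R(ρ(f))) ≤ τ(R(π(f))) for every f ∈ C(X), where R(x) denotes the range projection of x. Then τ(ρ(h)) ≤ τ(π(h)) for every positive function h ∈ C(X). -/
open scoped ComplexOrder ENNReal NNReal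

noncomputable section

namespace ShenShi

variable {E F : Type*}
  [NormedAddCommGroup E] [InnerProductSpace ℂ E] [CompleteSpace E]
  [NormedAddCommGroup F] [InnerProductSpace ℂ F] [CompleteSpace F]

/-- The Loewner (pre)order on bounded operators: `a ≤ b` iff `b - a` is positive. -/
def opLE (a b : E →L[ℂ] E) : Prop := (b - a).IsPositive

/-- `x` lies in the weak-operator-topology closure of the set `S` of operators. -/
def InWOTClosure (S : Set (E →L[ℂ] E)) (x : E →L[ℂ] E) : Prop :=
  ∀ (k : ℕ) (ξ η : Fin k → E) (ε : ℝ), 0 < ε →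
    ∃ s ∈ S, ∀ i, ‖(inner ℂ ((x - s) (ξ i)) (η i) : ℂ)‖ < ε

/-- `x` is a least upper bound of `s` for the Loewner order. -/
def OpIsLUB (s : Set (E →L[ℂ] E)) (x : E →L[ℂ] E) : Prop :=
  (∀ y ∈ s, opLE y x) ∧ ∀ z, (∀ y ∈ s, opLE y z) → opLE x z

/-- `p` is a projection belonging to the von Neumann algebra `M`. -/
def MemProj (M : VonNeumannAlgebra E) (p : E →L[ℂ] E) : Prop :=
  p ∈ M ∧ p * p = p ∧ star p = p

/-- `r` is the range projection of `x` in `M`: the smallest projection `q ∈ M`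
with `q * x = x` (the order on projections being `r ≤ q ↔ q * r = r`). -/
def IsRangeProjection (M : VonNeumannAlgebra E) (x r : E →L[ℂ] E) : Prop :=
  MemProj M r ∧ r * x = x ∧ ∀ q, MemProj M q → q * x = x → q * r = r

def IsUnitaryIn (M : VonNeumannAlgebra E) (u : E →L[ℂ] E) : Prop :=
  u ∈ M ∧ star u * u = 1 ∧ u * star u = 1

/-- A factor: a von Neumann algebra with trivial center. -/
def IsFactor (M : VonNeumannAlgebra E) : Prop :=
  ∀ x ∈ M, (∀ y ∈ M, x * y = y * x) → ∃ c : ℂ, x = c • (1 : E →L[ℂ] E)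

def IsInfiniteDimensionalVN (M : VonNeumannAlgebra E) : Prop :=
  ¬ ∃ s : Finset (E →L[ℂ] E), (↑s : Set (E →L[ℂ] E)) ⊆ (M : Set (E →L[ℂ] E)) ∧
      ∀ x ∈ M, x ∈ Submodule.span ℂ (↑s : Set (E →L[ℂ] E))

/-- `π` restricted to `S` is a `*`-homomorphism. -/
def IsStarHomOn {A B : Type*} [NonUnitalNonAssocSemiring A] [Module ℂ A] [Star A]
    [NonUnitalNonAssocSemiring B] [Module ℂ B] [Star B]
    (S : Set A) (π : A → B) : Prop :=
  (∀ x ∈ S, ∀ y ∈ S, π (x + y) = π x + π y) ∧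
  (∀ x ∈ S, ∀ y ∈ S, π (x * y) = π x * π y) ∧
  (∀ (c : ℂ), ∀ x ∈ S, π (c • x) = c • π x) ∧
  (∀ x ∈ S, π (star x) = star (π x))

/-- A faithful normal tracial state on the von Neumann algebra `M`. -/
def IsFNTracialState (M : VonNeumannAlgebra E) (τ : (E →L[ℂ] E) → ℂ) : Prop :=
  (∀ x ∈ M, ∀ y ∈ M, τ (x + y) = τ x + τ y) ∧
  (∀ (c : ℂ), ∀ x ∈ M, τ (c • x) = c * τ x) ∧
  τ 1 = 1 ∧
  (∀ x ∈ M, ∀ y ∈ M, τ (x * y) = τ (y * x)) ∧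
  (∀ x ∈ M, x.IsPositive → 0 ≤ τ x) ∧
  (∀ x ∈ M, τ (star x * x) = 0 → x = 0) ∧
  (∀ (ι : Type) (ipre : Preorder ι) (f : ι → E →L[ℂ] E) (x : E →L[ℂ] E),
     Nonempty ι → (∀ i, f i ∈ M ∧ (f i).IsPositive) →
     (∀ i j, ipre.le i j → opLE (f i) (f j)) →
     x ∈ M → OpIsLUB (Set.range f) x →
     IsLUB (Set.range fun i => (τ (f i)).re) ((τ x).re))

/-- A type II₁ factor together with its faithful normal tracial state:
an infinite-dimensional factor with a faithful normal tracial state. -/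
def IsTypeII1Factor (M : VonNeumannAlgebra E) (τ : (E →L[ℂ] E) → ℂ) : Prop :=
  IsFactor M ∧ IsInfiniteDimensionalVN M ∧ IsFNTracialState M τ

/-- A faithful normal semifinite tracial weight on the von Neumann algebra `M`. -/
def IsFNSTracialWeight (M : VonNeumannAlgebra E) (τ : (E →L[ℂ] E) → ℝ≥0∞) : Prop :=
  (∀ x y, x ∈ M → ContinuousLinearMap.IsPositive x → y ∈ M →
     ContinuousLinearMap.IsPositive y → τ (x + y) = τ x + τ y) ∧
  (∀ (c : ℝ≥0) (x : E →L[ℂ] E), x ∈ M → x.IsPositive →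
     τ (((c : ℝ) : ℂ) • x) = (c : ℝ≥0∞) * τ x) ∧
  (∀ x ∈ M, τ (star x * x) = τ (x * star x)) ∧
  (∀ x, x ∈ M → ContinuousLinearMap.IsPositive x → τ x = 0 → x = 0) ∧
  (∀ (ι : Type) (ipre : Preorder ι) (f : ι → E →L[ℂ] E) (x : E →L[ℂ] E),
     Nonempty ι → (∀ i, f i ∈ M ∧ (f i).IsPositive) →
     (∀ i j, ipre.le i j → opLE (f i) (f j)) →
     x ∈ M → OpIsLUB (Set.range f) x → τ x = ⨆ i, τ (f i)) ∧
  (∀ x, x ∈ M → ContinuousLinearMap.IsPositive x → x ≠ 0 →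
     ∃ y, y ∈ M ∧ ContinuousLinearMap.IsPositive y ∧ y ≠ 0 ∧ opLE y x ∧ τ y < ⊤)

/-- `a` is an `(M,τ)`-finite-rank operator: `a = x * p * y` with `x y ∈ M` and
`p ∈ M` a projection of finite trace. -/
def IsFiniteRank (M : VonNeumannAlgebra E) (τ : (E →L[ℂ] E) → ℝ≥0∞)
    (a : E →L[ℂ] E) : Prop :=
  ∃ x p y, x ∈ M ∧ y ∈ M ∧ MemProj M p ∧ τ p < ⊤ ∧ a = x * p * y

/-- `a` is compact in `(M,τ)`: it lies in the operator-norm closure of the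
`(M,τ)`-finite-rank operators. -/
def IsCompactIn (M : VonNeumannAlgebra E) (τ : (E →L[ℂ] E) → ℝ≥0∞)
    (a : E →L[ℂ] E) : Prop :=
  a ∈ closure {b | IsFiniteRank M τ b}

def IsStarSubalgebraSet {A : Type*} [NonUnitalNonAssocSemiring A] [Module ℂ A] [Star A]
    (S : Set A) : Prop :=
  (0 : A) ∈ S ∧ (∀ x ∈ S, ∀ y ∈ S, x + y ∈ S) ∧ (∀ x ∈ S, ∀ y ∈ S, x * y ∈ S) ∧
  (∀ (c : ℂ), ∀ x ∈ S, c • x ∈ S) ∧ (∀ x ∈ S, star x ∈ S)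

/-- `S` is a C*-subalgebra (norm-closed `*`-subalgebra) of the von Neumann algebra `M`. -/
def IsCStarSubalgebraOf (M : VonNeumannAlgebra E) (S : Set (E →L[ℂ] E)) : Prop :=
  IsStarSubalgebraSet S ∧ IsClosed S ∧ S ⊆ (M : Set (E →L[ℂ] E))

/-- The C*-algebra `A` (with unit `IA`) is `n`-homogeneous: every irreducible
representation of `A` is of dimension `n`. -/
def IsNHomogeneous (A : Set (E →L[ℂ] E)) (IA : E →L[ℂ] E) (n : ℕ) : Prop :=
  ∀ (K : Type) [NormedAddCommGroup K] [InnerProductSpace ℂ K] [CompleteSpace K],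
    ∀ σ : (E →L[ℂ] E) → (K →L[ℂ] K),
      Nontrivial K → IsStarHomOn A σ → σ IA = 1 →
      (∀ T : K →L[ℂ] K, (∀ a ∈ A, T * σ a = σ a * T) → ∃ c : ℂ, T = c • (1 : K →L[ℂ] K)) →
      FiniteDimensional ℂ K ∧ Module.finrank ℂ K = n

/-- The C*-algebra `A` (with unit `IA`) is locally homogeneous: a finite direct sum
of homogeneous C*-algebras. -/
def IsLocallyHomogeneous (A : Set (E →L[ℂ] E)) (IA : E →L[ℂ] E) : Prop :=
  ∃ (m : ℕ) (n : Fin m → ℕ) (e : Fin m → E →L[ℂ] E),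
    (∀ i, e i ∈ A ∧ e i * e i = e i ∧ star (e i) = e i ∧ ∀ a ∈ A, a * e i = e i * a) ∧
    (∀ i j, i ≠ j → e i * e j = 0) ∧
    (∑ i, e i) = IA ∧
    (∀ i, IsNHomogeneous {x | ∃ a ∈ A, x = a * e i} (e i) (n i))

/-- `A` is an AH subalgebra of `M` with identity `IA`: it contains an increasing
sequence of locally homogeneous C*-subalgebras whose union is norm-dense in `A`. -/
def IsAHSubalgebra (M : VonNeumannAlgebra E) (A : Set (E →L[ℂ] E)) (IA : E →L[ℂ] E) : Prop :=
  IsCStarSubalgebraOf M A ∧ IA ∈ A ∧ (∀ a ∈ A, a * IA = a ∧ IA * a = a) ∧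
  ∃ B : ℕ → Set (E →L[ℂ] E),
    (∀ k, B k ⊆ A) ∧ (∀ k, B k ⊆ B (k + 1)) ∧
    (∀ k, IsStarSubalgebraSet (B k) ∧ IsClosed (B k) ∧ IA ∈ B k ∧
      IsLocallyHomogeneous (B k) IA) ∧
    (∀ a ∈ A, a ∈ closure (⋃ k, B k))

def IsCountablyDecomposable (M : VonNeumannAlgebra E) : Prop :=
  ∀ S : Set (E →L[ℂ] E), (∀ p ∈ S, MemProj M p ∧ p ≠ 0) →
    (∀ p ∈ S, ∀ q ∈ S, p ≠ q → p * q = 0) → S.Countable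

def IsProperlyInfinite (M : VonNeumannAlgebra E) : Prop :=
  ∃ v, v ∈ M ∧ star v * v = 1 ∧ v * star v ≠ 1

/-- `p` is the supremum in `M` of the range projections of the members of `S`. -/
def IsProjSupOver (M : VonNeumannAlgebra E) (S : Set (E →L[ℂ] E)) (p : E →L[ℂ] E) : Prop :=
  MemProj M p ∧ (∀ x ∈ S, ∀ r, IsRangeProjection M x r → p * r = r) ∧
  (∀ q, MemProj M q → (∀ x ∈ S, ∀ r, IsRangeProjection M x r → q * r = r) → q * p = p)

/-- Normality of a map on `S`: it carries least upper bounds of bounded increasing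
nets of positive operators in `S` to least upper bounds. -/
def IsNormalOn (S : Set (E →L[ℂ] E)) (π : (E →L[ℂ] E) → (F →L[ℂ] F)) : Prop :=
  ∀ (ι : Type) (ipre : Preorder ι) (f : ι → E →L[ℂ] E) (x : E →L[ℂ] E),
    Nonempty ι → (∀ i, f i ∈ S ∧ (f i).IsPositive) →
    (∀ i j, ipre.le i j → opLE (f i) (f j)) →
    x ∈ S → OpIsLUB (Set.range f) x →
    OpIsLUB (Set.range fun i => π (f i)) (π x)

/-- Weak*-to-WOT continuity of `π` on `S`, expressed via bounded nets converging
in the weak operator topology. -/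
def IsWOTWOTContinuousOn (S : Set (E →L[ℂ] E)) (π : (E →L[ℂ] E) → (F →L[ℂ] F)) : Prop :=
  ∀ (ι : Type) (l : Filter ι) (f : ι → E →L[ℂ] E) (x : E →L[ℂ] E),
    (∀ i, f i ∈ S) → x ∈ S → (∃ C : ℝ, ∀ i, ‖f i‖ ≤ C) →
    (∀ ξ η : E, Filter.Tendsto (fun i => (inner ℂ (f i ξ) η : ℂ)) l (nhds (inner ℂ (x ξ) η))) →
    (∀ ξ η : F, Filter.Tendsto (fun i => (inner ℂ (π (f i) ξ) η : ℂ)) l (nhds (inner ℂ (π x ξ) η)))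

/-- `R` is a type Iₙ von Neumann algebra (with unit `u`): it possesses a system of
`n × n` matrix units whose relative commutant in `R` is abelian and which, together
with that relative commutant, generates `R`. -/
def IsTypeInSet (R : Set (E →L[ℂ] E)) (u : E →L[ℂ] E) (n : ℕ) : Prop :=
  ∃ e : Fin n → Fin n → E →L[ℂ] E,
    (∀ i j, e i j ∈ R) ∧
    (∀ i j, star (e i j) = e j i) ∧
    (∀ i j k l, e i j * e k l = if j = k then e i l else 0) ∧
    (∑ i, e i i) = u ∧
    (∀ x, x ∈ R → (∀ i j, x * e i j = e i j * x) →
      ∀ y, y ∈ R → (∀ i j, y * e i j = e i j * y) → x * y = y * x) ∧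
    (∀ r ∈ R, InWOTClosure
      ((Algebra.adjoin ℂ ({x | ∃ i j, x = e i j} ∪
        {x | x ∈ R ∧ ∀ i j, x * e i j = e i j * x}) :
          Subalgebra ℂ (E →L[ℂ] E)) : Set (E →L[ℂ] E)) r)



/-!
The range projection of `a ∈ N` is the orthogonal projection onto the closure of the range of
`a`; it lies in `N` because that subspace is invariant under the commutant `N'`. A positive
contraction `a` satisfies `a ≤ R(a)`, and `R(a) ≤ c` for every positive `c` with `c a = a`.

Cut `h ≥ 0` into layers `vₖ = min 1 (max 0 (h - k))`, so that `h = ∑ vₖ` and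
`vₖ vₖ₊₁ = vₖ₊₁`. Then `π(vₖ)` fixes the range of `π(vₖ₊₁)`, whence
`τ(ρ vₖ₊₁) ≤ τ(R(ρ vₖ₊₁)) ≤ τ(R(π vₖ₊₁)) ≤ τ(π vₖ)`, and likewise `τ(ρ v₀) ≤ τ(1) = 1`.
Summing over `k` gives `τ(ρ h) ≤ τ(π h) + 1`; applied to `h / ε` this gives
`τ(ρ h) ≤ τ(π h) + ε` for every `ε > 0`.
-/

def rangeProj (a : E →L[ℂ] E) : E →L[ℂ] E :=
  a.range.topologicalClosure.starProjection

lemma isStarProjection_rangeProj (a : E →L[ℂ] E) : IsStarProjection (rangeProj a) :=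
  isStarProjection_starProjection

lemma rangeProj_mul_self (a : E →L[ℂ] E) : rangeProj a * a = a := by
  ext v
  exact Submodule.starProjection_eq_self_iff.mpr
    (Submodule.le_topologicalClosure _ (LinearMap.mem_range_self (a : E →ₗ[ℂ] E) v))

lemma mul_rangeProj_of_mul_eq {a c : E →L[ℂ] E} (h : c * a = a) :
    c * rangeProj a = rangeProj a := by
  have hfix : (a.range : Set E) ⊆ {v | c v = v} := by
    rintro _ ⟨v, rfl⟩
    exact congr($h v)
  have hclosed : IsClosed {v : E | c v = v} := isClosed_eq c.continuous continuous_id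
  ext v
  have hv := Submodule.starProjection_apply_mem a.range.topologicalClosure v
  rw [← SetLike.mem_coe, Submodule.topologicalClosure_coe] at hv
  exact closure_minimal hfix hclosed hv

lemma rangeProj_mem {M : VonNeumannAlgebra E} {a : E →L[ℂ] E} (ha : a ∈ M) :
    rangeProj a ∈ M := by
  rw [VonNeumannAlgebra.IsStarProjection.mem_iff (isStarProjection_rangeProj a)]
  intro y hy
  rw [Module.End.mem_invtSubmodule, rangeProj, Submodule.range_starProjection]
  refine Submodule.topologicalClosure_minimal _ ?_ (isClosed_closure.preimage y.continuous)
  rintro _ ⟨v, rfl⟩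
  refine Submodule.le_topologicalClosure _ ⟨y v, ?_⟩
  exact congr($(VonNeumannAlgebra.mem_commutant_iff.mp hy a ha) v)

lemma isRangeProjection_rangeProj {M : VonNeumannAlgebra E} {a : E →L[ℂ] E} (ha : a ∈ M) :
    IsRangeProjection M a (rangeProj a) :=
  ⟨⟨rangeProj_mem ha, (isStarProjection_rangeProj a).isIdempotentElem,
      (isStarProjection_rangeProj a).isSelfAdjoint⟩,
    rangeProj_mul_self a, fun _ _ hq => mul_rangeProj_of_mul_eq hq⟩

lemma rangeProj_le_of_mul_eq {a c : E →L[ℂ] E} (hc : 0 ≤ c) (h : c * a = a) :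
    rangeProj a ≤ c := by
  set r := rangeProj a
  have hr : IsStarProjection r := isStarProjection_rangeProj a
  have hcr : c * r = r := mul_rangeProj_of_mul_eq h
  have hrc : r * c = r := by
    simpa [hr.isSelfAdjoint.star_eq, hc.isSelfAdjoint.star_eq] using congr(star $hcr)
  have hcompl : c - r = star (1 - r) * c * (1 - r) := by
    simp only [star_sub, star_one, hr.isSelfAdjoint.star_eq, sub_mul, mul_sub, one_mul, mul_one,
      hcr, hrc, hr.isIdempotentElem.eq]
    abel
  rw [← sub_nonneg, hcompl]
  exact star_left_conjugate_nonneg hc _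

lemma le_rangeProj {a : E →L[ℂ] E} (h0 : 0 ≤ a) (h1 : a ≤ 1) : a ≤ rangeProj a := by
  set r := rangeProj a
  have hr : IsStarProjection r := isStarProjection_rangeProj a
  have hra : r * a = a := rangeProj_mul_self a
  have har : a * r = a := by
    simpa [hr.isSelfAdjoint.star_eq, h0.isSelfAdjoint.star_eq] using congr(star $hra)
  have hcompr : r - a = star r * (1 - a) * r := by
    rw [hr.isSelfAdjoint.star_eq, mul_sub, mul_one, hra, sub_mul, har, hr.isIdempotentElem.eq]
  rw [← sub_nonneg, hcompr]
  exact star_left_conjugate_nonneg (sub_nonneg.mpr h1) _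

def IsStarHomOn.toNonUnitalStarAlgHom {A B : Type*} [NonUnitalNonAssocSemiring A] [Module ℂ A]
    [Star A] [NonUnitalNonAssocSemiring B] [Module ℂ B] [Star B] {φ : A → B}
    (hφ : IsStarHomOn Set.univ φ) : A →⋆ₙₐ[ℂ] B where
  toFun := φ
  map_add' x y := hφ.1 x trivial y trivial
  map_zero' := by simpa using hφ.2.2.1 0 0 trivial
  map_mul' x y := hφ.2.1 x trivial y trivial
  map_smul' c x := hφ.2.2.1 c x trivial
  map_star' x := hφ.2.2.2 x trivial

lemma map_le_one_of_le_one {A B F : Type*} [Ring A] [PartialOrder A] [StarRing A]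
    [StarOrderedRing A] [Ring B] [PartialOrder B] [StarRing B] [StarOrderedRing B] [FunLike F A B]
    [NonUnitalRingHomClass F A B] [NonUnitalStarRingHomClass F A B] (φ : F) {a : A} (ha : a ≤ 1) :
    φ a ≤ 1 := by
  have hφ1 : IsStarProjection (φ 1) :=
    ⟨by simp [IsIdempotentElem, ← map_mul], by simp [IsSelfAdjoint, ← map_star]⟩
  exact (OrderHomClass.mono φ ha).trans hφ1.le_one

lemma IsFNTracialState.map_zero {M : VonNeumannAlgebra E} {τ : (E →L[ℂ] E) → ℂ}
    (hτ : IsFNTracialState M τ) : τ 0 = 0 := by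
  simpa using hτ.2.1 0 0 (zero_mem M)

lemma IsFNTracialState.mono {M : VonNeumannAlgebra E} {τ : (E →L[ℂ] E) → ℂ}
    (hτ : IsFNTracialState M τ) {x y : E →L[ℂ] E} (hx : x ∈ M) (hy : y ∈ M) (hxy : x ≤ y) :
    τ x ≤ τ y := by
  obtain ⟨hadd, -, -, -, hpos, -⟩ := hτ
  rw [← add_sub_cancel x y, hadd x hx (y - x) (sub_mem hy hx)]
  exact le_add_of_nonneg_right (hpos _ (sub_mem hy hx) hxy)

lemma IsFNTracialState.map_sum {M : VonNeumannAlgebra E} {τ : (E →L[ℂ] E) → ℂ}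
    (hτ : IsFNTracialState M τ) {ι : Type*} (s : Finset ι) {f : ι → E →L[ℂ] E}
    (hf : ∀ i, f i ∈ M) : τ (∑ i ∈ s, f i) = ∑ i ∈ s, τ (f i) := by
  induction s using Finset.cons_induction with
  | empty => simpa using hτ.map_zero
  | cons i s _ ih =>
    rw [Finset.sum_cons, Finset.sum_cons, hτ.1 _ (hf i) _ (sum_mem fun j _ => hf j), ih]

lemma _root_.Complex.le_of_forall_pos_le_add {z w : ℂ} (h : ∀ ε : ℝ, 0 < ε → z ≤ w + ε) :
    z ≤ w := by
  refine Complex.le_def.mpr ⟨_root_.le_of_forall_pos_le_add fun ε hε => ?_, ?_⟩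
  · simpa using (Complex.le_def.mp (h ε hε)).1
  · simpa using (Complex.le_def.mp (h 1 one_pos)).2

def layer (k : ℕ) (t : ℝ) : ℝ := min 1 (max 0 (t - k))

lemma layer_nonneg (k : ℕ) (t : ℝ) : 0 ≤ layer k t := le_min zero_le_one (le_max_left _ _)

lemma layer_le_one (k : ℕ) (t : ℝ) : layer k t ≤ 1 := min_le_left _ _

lemma continuous_layer (k : ℕ) : Continuous (layer k) := by
  unfold layer; fun_prop

lemma layer_mul_layer_succ (k : ℕ) (t : ℝ) : layer k t * layer (k + 1) t = layer (k + 1) t := by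
  unfold layer
  push_cast
  rcases le_total t (k + 1) with h | h
  · simp [max_eq_left (sub_nonpos.mpr h)]
  · rw [max_eq_right (by linarith : (0 : ℝ) ≤ t - k), min_eq_left (by linarith : (1 : ℝ) ≤ t - k),
      one_mul]

lemma sum_range_layer {t : ℝ} (ht : 0 ≤ t) (K : ℕ) :
    ∑ k ∈ Finset.range K, layer k t = min t K := by
  induction K with
  | zero => simp [ht]
  | succ K ih =>
    rw [Finset.sum_range_succ, ih, layer]
    push_cast
    rcases le_total t K with h | h
    · rw [min_eq_left h, max_eq_left (by linarith), min_eq_right zero_le_one,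
        min_eq_left (by linarith), add_zero]
    · rw [min_eq_right h, max_eq_right (by linarith)]
      rcases le_total (t - K) 1 with h' | h'
      · rw [min_eq_right h', min_eq_left (by linarith)]
        ring
      · rw [min_eq_left h', min_eq_right (by linarith)]
section Layers

variable {X : Type*} [TopologicalSpace X]

def layerFun (h : C(X, ℂ)) (k : ℕ) : C(X, ℂ) :=
  ⟨fun x => (layer k (h x).re : ℂ), by have := continuous_layer k; fun_prop⟩

lemma layerFun_apply (h : C(X, ℂ)) (k : ℕ) (x : X) : layerFun h k x = (layer k (h x).re : ℂ) :=
  rfl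

lemma layerFun_nonneg (h : C(X, ℂ)) (k : ℕ) : 0 ≤ layerFun h k :=
  ContinuousMap.le_def.mpr fun _ => Complex.zero_le_real.mpr (layer_nonneg k _)

lemma layerFun_le_one (h : C(X, ℂ)) (k : ℕ) : layerFun h k ≤ 1 :=
  ContinuousMap.le_def.mpr fun x => by
    simpa [layerFun_apply] using Complex.real_le_real.mpr (layer_le_one k (h x).re)

lemma layerFun_mul_layerFun_succ (h : C(X, ℂ)) (k : ℕ) :
    layerFun h k * layerFun h (k + 1) = layerFun h (k + 1) := by
  ext x
  simp only [ContinuousMap.mul_apply, layerFun_apply, ← Complex.ofReal_mul, layer_mul_layer_succ]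

lemma sum_range_layerFun [CompactSpace X] {h : C(X, ℂ)} (hh : 0 ≤ h) {K : ℕ} (hK : ‖h‖ ≤ K) :
    ∑ k ∈ Finset.range K, layerFun h k = h := by
  ext x
  have hx : 0 ≤ h x := ContinuousMap.le_def.mp hh x
  have hxK : (h x).re ≤ K :=
    (Complex.re_le_norm _).trans ((h.norm_coe_le_norm x).trans hK)
  rw [ContinuousMap.sum_apply]
  simp only [layerFun_apply]
  rw [← Complex.ofReal_sum, sum_range_layer (Complex.nonneg_iff.mp hx).1, min_eq_left hxK,
    ← Complex.eq_re_of_ofReal_le (r := 0) (by simpa using hx)]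

end Layers

section TraceComparison

variable {X : Type*} [TopologicalSpace X] {M : VonNeumannAlgebra E} {τ : (E →L[ℂ] E) → ℂ}
  {π ρ : C(X, ℂ) →⋆ₙₐ[ℂ] (E →L[ℂ] E)}

lemma trace_le_of_mul_eq (hτ : IsFNTracialState M τ) (hπM : ∀ f, π f ∈ M) (hρM : ∀ f, ρ f ∈ M)
    (htr : ∀ f rπ rρ, IsRangeProjection M (π f) rπ → IsRangeProjection M (ρ f) rρ → τ rρ ≤ τ rπ)
    {f : C(X, ℂ)} (hf0 : 0 ≤ f) (hf1 : f ≤ 1) {c : E →L[ℂ] E} (hcM : c ∈ M) (hc0 : 0 ≤ c)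
    (hc : c * π f = π f) : τ (ρ f) ≤ τ c :=
  calc τ (ρ f) ≤ τ (rangeProj (ρ f)) :=
        hτ.mono (hρM f) (rangeProj_mem (hρM f))
          (le_rangeProj (map_nonneg ρ hf0) (map_le_one_of_le_one ρ hf1))
    _ ≤ τ (rangeProj (π f)) :=
        htr f _ _ (isRangeProjection_rangeProj (hπM f)) (isRangeProjection_rangeProj (hρM f))
    _ ≤ τ c := hτ.mono (rangeProj_mem (hπM f)) hcM (rangeProj_le_of_mul_eq hc0 hc)

lemma trace_le_add_one [CompactSpace X] (hτ : IsFNTracialState M τ) (hπM : ∀ f, π f ∈ M)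
    (hρM : ∀ f, ρ f ∈ M)
    (htr : ∀ f rπ rρ, IsRangeProjection M (π f) rπ → IsRangeProjection M (ρ f) rρ → τ rρ ≤ τ rπ)
    {h : C(X, ℂ)} (hh : 0 ≤ h) : τ (ρ h) ≤ τ (π h) + 1 := by
  set K := ⌈‖h‖⌉₊
  have hK : ‖h‖ ≤ K := Nat.le_ceil _
  have hK1 : ‖h‖ ≤ (K + 1 : ℕ) := hK.trans (by simp)
  set v := layerFun h
  have hρh : τ (ρ h) = ∑ k ∈ Finset.range (K + 1), τ (ρ (v k)) := by
    rw [← sum_range_layerFun hh hK1, map_sum, hτ.map_sum _ fun _ => hρM _]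
  have hπh : τ (π h) = ∑ k ∈ Finset.range K, τ (π (v k)) := by
    rw [← sum_range_layerFun hh hK, map_sum, hτ.map_sum _ fun _ => hπM _]
  have h0 : τ (ρ (v 0)) ≤ τ 1 :=
    trace_le_of_mul_eq hτ hπM hρM htr (layerFun_nonneg h 0) (layerFun_le_one h 0)
      (one_mem M) zero_le_one (one_mul _)
  have hsucc : ∀ k, τ (ρ (v (k + 1))) ≤ τ (π (v k)) := fun k =>
    trace_le_of_mul_eq hτ hπM hρM htr (layerFun_nonneg h _) (layerFun_le_one h _) (hπM _)
      (map_nonneg π (layerFun_nonneg h k)) (by rw [← map_mul, layerFun_mul_layerFun_succ])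
  rw [hρh, hπh, Finset.sum_range_succ']
  exact add_le_add (Finset.sum_le_sum fun k _ => hsucc k) (h0.trans_eq hτ.2.2.1)

lemma trace_le [CompactSpace X] (hτ : IsFNTracialState M τ) (hπM : ∀ f, π f ∈ M)
    (hρM : ∀ f, ρ f ∈ M)
    (htr : ∀ f rπ rρ, IsRangeProjection M (π f) rπ → IsRangeProjection M (ρ f) rρ → τ rρ ≤ τ rπ)
    {h : C(X, ℂ)} (hh : 0 ≤ h) : τ (ρ h) ≤ τ (π h) := by
  refine Complex.le_of_forall_pos_le_add fun ε hε => ?_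
  have hε0 : (0 : ℂ) < ε := Complex.zero_lt_real.mpr hε
  have hscaled := trace_le_add_one hτ hπM hρM htr (h := (ε⁻¹ : ℂ) • h)
    (ContinuousMap.le_def.mpr fun x => by
      simpa using mul_nonneg (inv_nonneg.mpr hε0.le) (ContinuousMap.le_def.mp hh x))
  obtain ⟨-, hsmul, -⟩ := hτ
  rw [map_smul, map_smul, hsmul _ _ (hρM h), hsmul _ _ (hπM h)] at hscaled
  have := mul_le_mul_of_nonneg_left hscaled hε0.le
  rwa [mul_add, ← mul_assoc, ← mul_assoc, mul_inv_cancel₀ hε0.ne', one_mul, one_mul, mul_one]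
    at this

end TraceComparison

theorem stmt_0_general
    {H : Type} [NormedAddCommGroup H] [InnerProductSpace ℂ H] [CompleteSpace H]
    {X : Type} [MetricSpace X] [CompactSpace X]
    (N : VonNeumannAlgebra H) (τ : (H →L[ℂ] H) → ℂ)
    (hN : IsTypeII1Factor N τ)
    (p : H →L[ℂ] H)
    (π ρ : C(X, ℂ) → (H →L[ℂ] H))
    (hπ : IsStarHomOn (Set.univ : Set C(X, ℂ)) π)
    (hπmem : ∀ f : C(X, ℂ), π f ∈ N)
    (hρ : IsStarHomOn (Set.univ : Set C(X, ℂ)) ρ)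
    (hρmem : ∀ f : C(X, ℂ), ρ f ∈ N ∧ p * ρ f = ρ f ∧ ρ f * p = ρ f)
    (htr : ∀ (f : C(X, ℂ)) (rπ rρ : H →L[ℂ] H),
        IsRangeProjection N (π f) rπ → IsRangeProjection N (ρ f) rρ → τ rρ ≤ τ rπ) :
    ∀ h : C(X, ℂ), (∀ x : X, 0 ≤ h x) → τ (ρ h) ≤ τ (π h) := fun _ hh =>
  trace_le (π := hπ.toNonUnitalStarAlgHom) (ρ := hρ.toNonUnitalStarAlgHom) hN.2.2 hπmem
    (fun f => (hρmem f).1) htr (ContinuousMap.le_def.mpr hh)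

/-- for unital ∗-homomorphisms `π : C(X) → N` and `ρ : C(X) → pNp`
of a unital separable abelian C*-algebra `C(X)` (`X` a compact metric space)
into a type II₁ factor `(N,τ)` with separable predual, if
`τ(R(ρ f)) ≤ τ(R(π f))` for all `f`, then `τ(ρ h) ≤ τ(π h)` for all positive `h`. -/
theorem stmt_0
    {H : Type} [NormedAddCommGroup H] [InnerProductSpace ℂ H] [CompleteSpace H]
    {X : Type} [MetricSpace X] [CompactSpace X]
    (N : VonNeumannAlgebra H) (τ : (H →L[ℂ] H) → ℂ)
    (hN : IsTypeII1Factor N τ)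
    (hsep : TopologicalSpace.SeparableSpace H)
    (p : H →L[ℂ] H) (hp : MemProj N p)
    (π ρ : C(X, ℂ) → (H →L[ℂ] H))
    (hπ : IsStarHomOn (Set.univ : Set C(X, ℂ)) π)
    (hπ1 : π 1 = 1)
    (hπmem : ∀ f : C(X, ℂ), π f ∈ N)
    (hρ : IsStarHomOn (Set.univ : Set C(X, ℂ)) ρ)
    (hρ1 : ρ 1 = p)
    (hρmem : ∀ f : C(X, ℂ), ρ f ∈ N ∧ p * ρ f = ρ f ∧ ρ f * p = ρ f)
    (htr : ∀ (f : C(X, ℂ)) (rπ rρ : H →L[ℂ] H),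
        IsRangeProjection N (π f) rπ → IsRangeProjection N (ρ f) rρ → τ rρ ≤ τ rπ) :
    ∀ h : C(X, ℂ), (∀ x : X, 0 ≤ h x) → τ (ρ h) ≤ τ (π h) :=
  stmt_0_general N τ hN p π ρ hπ hπmem hρ hρmem htr

end ShenShi
end
end

section
/- Let M be a von Neumann algebra with a faithful normal semifinite tracial weight τ, and let A be a *-subalgebra of F(M,τ) (the (M,τ)-finite-rank operators) that is the linear span of its positive part A₊. If ρ is a *-isomorphism of A into M that is approximately unitarily equivalent in M to the identity map of A (i.e., there are unitaries u_k ∈ M with lim_k ‖ρ(a) − u_k* a u_k‖ = 0 for every a ∈ A), then τ(ρ(a)) = τ(a) for every a ∈ A₊. -/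
open scoped ComplexOrder ENNReal NNReal

noncomputable section

namespace ShenShi

variable {E F : Type*}
  [NormedAddCommGroup E] [InnerProductSpace ℂ E] [CompleteSpace E]
  [NormedAddCommGroup F] [InnerProductSpace ℂ F] [CompleteSpace F]

/-! `τ` is unitarily invariant, and it does not jump up along norm limits of unitary conjugates:
if `X ≤ u⋆ Y u + ε` and `c = g(X)` with `g(t)² = (t - δ)₊ / max t δ`, then `c X c = (X - δ)₊`
and `ε c² ≤ (ε / δ) (X - δ)₊`, so `(1 - ε / δ) (X - δ)₊ ≤ c u⋆ Y u c`, whose trace is at most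
`τ Y`. Letting `ε → 0` and then `δ → 0` (normality of `τ`) gives `τ X ≤ τ Y`. Now
`ρ a = lim u_k⋆ a u_k` and `a = lim u_k (ρ a) u_k⋆`, so both inequalities hold. -/

open Filter Topology

theorem _root_.VonNeumannAlgebra.isClosed (M : VonNeumannAlgebra E) :
    IsClosed (M : Set (E →L[ℂ] E)) := by
  rw [← M.centralizer_centralizer]
  exact Set.isClosed_centralizer _

theorem _root_.VonNeumannAlgebra.cfc_mem (M : VonNeumannAlgebra E) (f : ℝ → ℝ)
    {x : E →L[ℂ] E} (hx : x ∈ M) : cfc f x ∈ M :=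
  have : IsClosed (M.toStarSubalgebra : Set (E →L[ℂ] E)) := M.isClosed
  _root_.cfc_mem (𝕜' := ℂ) (s := M.toStarSubalgebra) f hx

theorem IsUnitaryIn.mem_unitary {M : VonNeumannAlgebra E} {u : E →L[ℂ] E}
    (hu : IsUnitaryIn M u) : u ∈ unitary (E →L[ℂ] E) :=
  ⟨hu.2.1, hu.2.2⟩

theorem IsUnitaryIn.star_mul_mul_mem {M : VonNeumannAlgebra E} {u Y : E →L[ℂ] E}
    (hu : IsUnitaryIn M u) (hY : Y ∈ M) : star u * Y * u ∈ M :=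
  mul_mem (mul_mem (star_mem hu.1) hY) hu.1

theorem IsUnitaryIn.star {M : VonNeumannAlgebra E} {u : E →L[ℂ] E}
    (hu : IsUnitaryIn M u) : IsUnitaryIn M (star u) :=
  ⟨star_mem hu.1, by rw [star_star]; exact hu.2.2, by rw [star_star]; exact hu.2.1⟩

theorem tendsto_unitary_conj_symm {A : Type*} [NormedRing A] [StarRing A] [CStarRing A]
    {u : ℕ → A} (hu : ∀ k, u k ∈ unitary A) {X Y : A}
    (h : Tendsto (fun k => star (u k) * Y * u k) atTop (𝓝 X)) :
    Tendsto (fun k => u k * X * star (u k)) atTop (𝓝 Y) := by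
  rw [tendsto_iff_norm_sub_tendsto_zero] at h ⊢
  refine h.congr fun k => ?_
  have hconj : star (u k) * Y * u k - X = star (u k) * (Y - u k * X * star (u k)) * u k := by
    simp only [mul_sub, sub_mul, ← mul_assoc, Unitary.star_mul_self_of_mem (hu k), one_mul]
    simp only [mul_assoc, Unitary.star_mul_self_of_mem (hu k), mul_one]
  rw [hconj, CStarRing.norm_mul_mem_unitary _ (hu k),
    CStarRing.norm_mem_unitary_mul _ (Unitary.star_mem (hu k)), norm_sub_rev]

theorem tendsto_cfc_max_sub_one_div_succ {A : Type*} [CStarAlgebra A] [PartialOrder A]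
    [StarOrderedRing A] {X : A} (hX0 : 0 ≤ X) :
    Tendsto (fun n : ℕ => cfc (fun t : ℝ => max (t - 1 / (n + 1)) 0) X) atTop (𝓝 X) := by
  have hX : cfc (fun t : ℝ => max t 0) X = X := by
    rw [cfc_congr fun t ht => max_eq_left (spectrum_nonneg_of_nonneg hX0 ht), cfc_id' ℝ X]
  conv => enter [3, 1]; rw [← hX]
  refine tendsto_cfc_fun ?_ (Eventually.of_forall fun n => by fun_prop)
  refine (Metric.tendstoUniformly_iff.2 fun ε hε => ?_).tendstoUniformlyOn
  filter_upwards [tendsto_one_div_add_atTop_nhds_zero_nat.eventually (gt_mem_nhds hε)]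
    with n hn t
  calc dist (max t 0) (max (t - 1 / (n + 1)) 0) ≤ |t - (t - 1 / (n + 1))| :=
        abs_max_sub_max_le_abs _ _ _
    _ < ε := by rwa [sub_sub_cancel, abs_of_pos (by positivity)]

theorem monotone_cfc_max_sub_one_div_succ {A : Type*} [CStarAlgebra A] [PartialOrder A]
    [StarOrderedRing A] (X : A) :
    Monotone (fun n : ℕ => cfc (fun t : ℝ => max (t - 1 / (n + 1)) 0) X) := fun _ _ hij =>
  cfc_mono fun t _ => max_le_max (sub_le_sub_left (Nat.one_div_le_one_div hij) t) le_rfl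

namespace IsFNSTracialWeight

variable {M : VonNeumannAlgebra E} {τ : (E →L[ℂ] E) → ℝ≥0∞}

theorem map_add (hτ : IsFNSTracialWeight M τ) {x y : E →L[ℂ] E}
    (hx : x ∈ M) (hx0 : 0 ≤ x) (hy : y ∈ M) (hy0 : 0 ≤ y) : τ (x + y) = τ x + τ y :=
  hτ.1 x y hx ((ContinuousLinearMap.nonneg_iff_isPositive x).mp hx0) hy
    ((ContinuousLinearMap.nonneg_iff_isPositive y).mp hy0)

theorem mono (hτ : IsFNSTracialWeight M τ) {x y : E →L[ℂ] E}
    (hx : x ∈ M) (hy : y ∈ M) (hx0 : 0 ≤ x) (hxy : x ≤ y) : τ x ≤ τ y := by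
  rw [← add_sub_cancel x y, hτ.map_add hx hx0 (sub_mem hy hx) (sub_nonneg.mpr hxy)]
  exact le_self_add

theorem map_smul (hτ : IsFNSTracialWeight M τ) {x : E →L[ℂ] E} (hx : x ∈ M) (hx0 : 0 ≤ x)
    {r : ℝ} (hr : 0 ≤ r) : τ (r • x) = ENNReal.ofReal r * τ x := by
  have h := hτ.2.1 r.toNNReal x hx ((ContinuousLinearMap.nonneg_iff_isPositive x).mp hx0)
  rwa [Real.coe_toNNReal r hr, Complex.coe_smul] at h

theorem map_star_mul_mul_le (hτ : IsFNSTracialWeight M τ) {c W : E →L[ℂ] E}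
    (hc : c ∈ M) (hc1 : c * star c ≤ 1) (hW : W ∈ M) (hW0 : 0 ≤ W) :
    τ (star c * W * c) ≤ τ W := by
  have hwM : CFC.sqrt W ∈ M := by rw [CFC.sqrt_eq_real_sqrt W, cfcₙ_eq_cfc]; exact M.cfc_mem _ hW
  set w := CFC.sqrt W
  have hwsa : star w = w := (CFC.sqrt_nonneg W).isSelfAdjoint
  have hww : w * w = W := CFC.sqrt_mul_sqrt_self W
  have hconj : w * (c * star c) * w ≤ W := by
    simpa [hwsa, hww] using star_left_conjugate_le_conjugate hc1 w
  have hconj0 : 0 ≤ w * (c * star c) * w := by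
    simpa [hwsa] using star_left_conjugate_nonneg (star_mul_self_nonneg (star c)) w
  calc τ (star c * W * c) = τ (star (w * c) * (w * c)) := by
        simp only [star_mul, hwsa, ← hww, mul_assoc]
    _ = τ ((w * c) * star (w * c)) := hτ.2.2.1 _ (mul_mem hwM hc)
    _ = τ (w * (c * star c) * w) := by simp only [star_mul, hwsa, mul_assoc]
    _ ≤ τ W := hτ.mono (mul_mem (mul_mem hwM (mul_mem hc (star_mem hc))) hwM) hW hconj0 hconj

theorem eq_iSup_of_monotone_of_tendsto (hτ : IsFNSTracialWeight M τ) {s : ℕ → E →L[ℂ] E}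
    {X : E →L[ℂ] E} (hs : ∀ n, s n ∈ M) (hs0 : ∀ n, 0 ≤ s n) (hmono : Monotone s)
    (hX : X ∈ M) (hlim : Tendsto s atTop (𝓝 X)) : τ X = ⨆ n, τ (s n) :=
  hτ.2.2.2.2.1 ℕ inferInstance s X ⟨0⟩
    (fun n => ⟨hs n, (ContinuousLinearMap.nonneg_iff_isPositive _).mp (hs0 n)⟩)
    (fun _ _ hij => hmono hij) hX
    ⟨by rintro _ ⟨n, rfl⟩; exact hmono.ge_of_tendsto hlim n,
      fun _ hz => le_of_tendsto' hlim fun n => hz _ ⟨n, rfl⟩⟩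

theorem ofReal_mul_cfc_max_sub_le (hτ : IsFNSTracialWeight M τ) {X T : E →L[ℂ] E}
    (hXsa : IsSelfAdjoint X) (hX : X ∈ M) (hT : T ∈ M) (hT0 : 0 ≤ T) {ε δ : ℝ}
    (hδ : 0 < δ) (hε : 0 ≤ ε) (hεδ : ε ≤ δ) (hXT : X ≤ T + algebraMap ℝ _ ε) :
    ENNReal.ofReal (1 - ε / δ) * τ (cfc (fun t : ℝ => max (t - δ) 0) X) ≤ τ T := by
  set F := cfc (fun t : ℝ => max (t - δ) 0) X
  have hmax : ∀ t, 0 < max t δ := fun t => hδ.trans_le (le_max_right t δ)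
  obtain ⟨g, hg, hgg⟩ : ∃ g : ℝ → ℝ, Continuous g ∧
      ∀ t, g t * g t = max (t - δ) 0 / max t δ :=
    ⟨fun t => √(max (t - δ) 0 / max t δ),
      Real.continuous_sqrt.comp ((by fun_prop : Continuous fun t : ℝ => max (t - δ) 0).div
        (by fun_prop) fun t => (hmax t).ne'),
      fun t => Real.mul_self_sqrt (div_nonneg (le_max_right _ _) (hmax t).le)⟩
  set c := cfc g X
  have hcM : c ∈ M := M.cfc_mem g hX
  have hcsa : star c = c := cfc_predicate g X
  have hcXc : c * X * c = F := by
    conv_lhs => rw [← cfc_id' ℝ X, ← cfc_mul .., ← cfc_mul ..]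
    refine cfc_congr fun t _ => ?_
    rw [mul_right_comm, hgg]
    rcases le_total t δ with htδ | htδ
    · simp [max_eq_right (sub_nonpos.2 htδ)]
    · rw [max_eq_left (sub_nonneg.2 htδ), max_eq_left htδ,
        div_mul_cancel₀ _ (hδ.trans_le htδ).ne']
  have hcc : ε • (c * c) ≤ (ε / δ) • F := by
    rw [← cfc_mul .., ← cfc_smul .., ← cfc_smul ..]
    refine cfc_mono fun t _ => ?_
    rw [smul_eq_mul, smul_eq_mul, hgg, div_mul_eq_mul_div, mul_div_assoc]
    exact mul_le_mul_of_nonneg_left (div_le_div_of_nonneg_left (le_max_right _ _) hδ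
      (le_max_right t δ)) hε
  have hcc1 : c * star c ≤ 1 := by
    rw [hcsa, ← cfc_mul .., ← cfc_one ℝ X]
    refine cfc_mono fun t _ => ?_
    rw [hgg, Pi.one_apply, div_le_one (hmax t)]
    exact max_le ((sub_le_self t hδ.le).trans (le_max_left t δ)) (hmax t).le
  have hFT : (1 - ε / δ) • F ≤ c * T * c := by
    have h1 : F ≤ c * T * c + ε • (c * c) := by
      have h := star_left_conjugate_le_conjugate hXT c
      rwa [mul_add, add_mul, Algebra.algebraMap_eq_smul_one, mul_smul_comm, mul_one,
        smul_mul_assoc, hcsa, hcXc] at h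
    rw [sub_smul, one_smul, sub_le_iff_le_add]
    exact h1.trans (add_le_add le_rfl hcc)
  have hr : 0 ≤ 1 - ε / δ := sub_nonneg.2 ((div_le_one hδ).2 hεδ)
  have hFM : F ∈ M := M.cfc_mem _ hX
  have hF0 : 0 ≤ F := cfc_nonneg fun t _ => le_max_right _ _
  have hrFM : (1 - ε / δ) • F ∈ M := by
    rw [← Complex.coe_smul]
    exact M.toStarSubalgebra.smul_mem hFM _
  calc ENNReal.ofReal (1 - ε / δ) * τ F = τ ((1 - ε / δ) • F) := (hτ.map_smul hFM hF0 hr).symm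
    _ ≤ τ (c * T * c) :=
        hτ.mono hrFM (mul_mem (mul_mem hcM hT) hcM) (smul_nonneg hr hF0) hFT
    _ ≤ τ T := by simpa only [hcsa] using hτ.map_star_mul_mul_le hcM hcc1 hT hT0

theorem cfc_max_sub_le_of_tendsto_unitary_conj (hτ : IsFNSTracialWeight M τ)
    {X Y : E →L[ℂ] E} (hX : X ∈ M) (hXsa : IsSelfAdjoint X) (hY : Y ∈ M) (hY0 : 0 ≤ Y)
    {u : ℕ → E →L[ℂ] E} (hu : ∀ k, IsUnitaryIn M (u k))
    (hlim : Tendsto (fun k => star (u k) * Y * u k) atTop (𝓝 X)) {δ : ℝ} (hδ : 0 < δ) :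
    τ (cfc (fun t : ℝ => max (t - δ) 0) X) ≤ τ Y := by
  set T := fun k => star (u k) * Y * u k
  have hTM : ∀ k, T k ∈ M := fun k => (hu k).star_mul_mul_mem hY
  have hT0 : ∀ k, 0 ≤ T k := fun k => star_left_conjugate_nonneg hY0 (u k)
  have hdist : Tendsto (fun k => ‖X - T k‖) atTop (𝓝 0) :=
    (tendsto_iff_norm_sub_tendsto_zero.1 hlim).congr fun k => norm_sub_rev _ _
  have hXT : ∀ k, X ≤ T k + algebraMap ℝ _ ‖X - T k‖ := fun k =>
    sub_le_iff_le_add'.1 (hXsa.sub (hT0 k).isSelfAdjoint).le_algebraMap_norm_self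
  set F := cfc (fun t : ℝ => max (t - δ) 0) X
  have hcoef : Tendsto (fun k => ENNReal.ofReal (1 - ‖X - T k‖ / δ) * τ F) atTop (𝓝 (1 * τ F)) := by
    refine ENNReal.Tendsto.mul_const ?_ (Or.inl one_ne_zero)
    simpa using ENNReal.tendsto_ofReal ((hdist.div_const δ).const_sub 1)
  rw [← one_mul (τ F)]
  refine le_of_tendsto hcoef ?_
  filter_upwards [hdist.eventually (ge_mem_nhds hδ)] with k hk
  exact (hτ.ofReal_mul_cfc_max_sub_le hXsa hX (hTM k) (hT0 k) hδ (norm_nonneg _) hk (hXT k)).trans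
    (hτ.map_star_mul_mul_le (hu k).1 (hu k).2.2.le hY hY0)

theorem le_of_tendsto_unitary_conj (hτ : IsFNSTracialWeight M τ) {X Y : E →L[ℂ] E}
    (hY : Y ∈ M) (hY0 : 0 ≤ Y) {u : ℕ → E →L[ℂ] E} (hu : ∀ k, IsUnitaryIn M (u k))
    (hlim : Tendsto (fun k => star (u k) * Y * u k) atTop (𝓝 X)) : τ X ≤ τ Y := by
  have hX : X ∈ M :=
    M.isClosed.mem_of_tendsto hlim (Eventually.of_forall fun k => (hu k).star_mul_mul_mem hY)
  have hX0 : 0 ≤ X := ge_of_tendsto' hlim fun k => star_left_conjugate_nonneg hY0 (u k)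
  rw [hτ.eq_iSup_of_monotone_of_tendsto (fun n => M.cfc_mem _ hX)
    (fun n => cfc_nonneg fun t _ => le_max_right _ _) (monotone_cfc_max_sub_one_div_succ X) hX
    (tendsto_cfc_max_sub_one_div_succ hX0)]
  exact iSup_le fun n => hτ.cfc_max_sub_le_of_tendsto_unitary_conj hX hX0.isSelfAdjoint hY hY0
    hu hlim (by positivity)

end IsFNSTracialWeight

theorem stmt_7_general
    {E : Type} [NormedAddCommGroup E] [InnerProductSpace ℂ E] [CompleteSpace E]
    (M : VonNeumannAlgebra E) (τ : (E →L[ℂ] E) → ℝ≥0∞)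
    (hτ : IsFNSTracialWeight M τ)
    (A : Set (E →L[ℂ] E))
    (ρ : (E →L[ℂ] E) → (E →L[ℂ] E))
    (hρmem : ∀ x ∈ A, ρ x ∈ M)
    (hau : ∃ u : ℕ → (E →L[ℂ] E), (∀ k, IsUnitaryIn M (u k)) ∧
        ∀ a ∈ A, Filter.Tendsto (fun k => ‖ρ a - star (u k) * a * u k‖)
          Filter.atTop (nhds 0)) :
    ∀ a ∈ A, ContinuousLinearMap.IsPositive a → τ (ρ a) = τ a := by
  obtain ⟨u, hu, hconv⟩ := hau
  intro a ha hapos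
  have hlim : Tendsto (fun k => star (u k) * a * u k) atTop (𝓝 (ρ a)) :=
    tendsto_iff_norm_sub_tendsto_zero.2 ((hconv a ha).congr fun k => norm_sub_rev _ _)
  have hlim' : Tendsto (fun k => star (star (u k)) * ρ a * star (u k)) atTop (𝓝 a) := by
    simpa only [star_star] using tendsto_unitary_conj_symm (fun k => (hu k).mem_unitary) hlim
  have haM : a ∈ M := M.isClosed.mem_of_tendsto hlim' (Eventually.of_forall fun k =>
    (hu k).star.star_mul_mul_mem (hρmem a ha))
  have ha0 : 0 ≤ a := (ContinuousLinearMap.nonneg_iff_isPositive a).2 hapos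
  have hρa0 : 0 ≤ ρ a := ge_of_tendsto' hlim fun k => star_left_conjugate_nonneg ha0 (u k)
  exact le_antisymm (hτ.le_of_tendsto_unitary_conj haM ha0 hu hlim)
    (hτ.le_of_tendsto_unitary_conj (hρmem a ha) hρa0 (fun k => (hu k).star) hlim')

/-- let `A ⊆ F(M,τ)` be a ∗-subalgebra spanned by its positive part,
and `ρ : A → M` a ∗-isomorphism approximately unitarily equivalent in `M` to the
identity map of `A`.  Then `τ(ρ a) = τ a` for every positive `a ∈ A`. -/
theorem stmt_7
    {E : Type} [NormedAddCommGroup E] [InnerProductSpace ℂ E] [CompleteSpace E]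
    (M : VonNeumannAlgebra E) (τ : (E →L[ℂ] E) → ℝ≥0∞)
    (hτ : IsFNSTracialWeight M τ)
    (A : Set (E →L[ℂ] E)) (hA : IsStarSubalgebraSet A)
    (hAF : ∀ x ∈ A, IsFiniteRank M τ x)
    (hAspan : ∀ a ∈ A, ∃ (k : ℕ) (c : Fin k → ℂ) (x : Fin k → E →L[ℂ] E),
        (∀ i, x i ∈ A ∧ (x i).IsPositive) ∧ a = ∑ i, c i • x i)
    (ρ : (E →L[ℂ] E) → (E →L[ℂ] E))
    (hρ : IsStarHomOn A ρ)
    (hρinj : ∀ x ∈ A, ∀ y ∈ A, ρ x = ρ y → x = y)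
    (hρmem : ∀ x ∈ A, ρ x ∈ M)
    (hau : ∃ u : ℕ → (E →L[ℂ] E), (∀ k, IsUnitaryIn M (u k)) ∧
        ∀ a ∈ A, Filter.Tendsto (fun k => ‖ρ a - star (u k) * a * u k‖)
          Filter.atTop (nhds 0)) :
    ∀ a ∈ A, ContinuousLinearMap.IsPositive a → τ (ρ a) = τ a :=
  stmt_7_general M τ hτ A ρ hρmem hau

end ShenShi
end
end
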